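/- Under the conditions of the descent inequality, if additionally 0 < ηβ ≤ 1 and |⟨∇f(x), δ⟩| ≤ a²‖∇f(x)‖² with a² ∈ [0, 1/2), then f(x - η(∇f(x) + δ)) ≤ f(x) + (β η²/2)‖δ‖² - η(1 - a² - βη(1/2 - a²))‖∇f(x)‖², and the coefficient z := 1 - a² - βη(1/2 - a²) is strictly positive. -/

import Mathlib

open Real InnerProductSpace

lemma descent_aux {d : ℕ} {f : EuclideanSpace ℝ (Fin d) → ℝ} {β : ℝ} (hβ : 0 < β)
    (hdiff : Differentiable ℝ f)
    (hlip : ∀ x y, ‖gradient f x - gradient f y‖ ≤ β * ‖x - y‖)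
    (x v : EuclideanSpace ℝ (Fin d)) :
    f (x + v) ≤ f x + ⟪gradient f x, v⟫_ℝ + β / 2 * ‖v‖ ^ 2 := by
  set g := gradient f x with hg
  have hderiv : ∀ t : ℝ, HasDerivAt (fun t : ℝ => f (x + t • v))
      ⟪gradient f (x + t • v), v⟫_ℝ t := by
    intro t
    have hc : HasDerivAt (fun t : ℝ => x + t • v) v t := by
      simpa using ((hasDerivAt_id t).smul_const v).const_add x
    have hf := ((hdiff (x + t • v)).hasGradientAt).hasFDerivAt
    have := hf.comp_hasDerivAt t hc
    exact this
  set h : ℝ → ℝ := fun t => f (x + t • v) - t * ⟪g, v⟫_ℝ - β / 2 * t ^ 2 * ‖v‖ ^ 2 with hh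
  have hderivh : ∀ t : ℝ, HasDerivAt h
      (⟪gradient f (x + t • v), v⟫_ℝ - ⟪g, v⟫_ℝ - β * t * ‖v‖ ^ 2) t := by
    intro t
    have h1 : HasDerivAt (fun t : ℝ => t * ⟪g, v⟫_ℝ) ⟪g, v⟫_ℝ t := by
      simpa using (hasDerivAt_id t).mul_const ⟪g, v⟫_ℝ
    have h2 : HasDerivAt (fun t : ℝ => β / 2 * t ^ 2 * ‖v‖ ^ 2) (β * t * ‖v‖ ^ 2) t := by
      have := ((hasDerivAt_pow 2 t).const_mul (β / 2)).mul_const (‖v‖ ^ 2)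
      refine this.congr_deriv ?_
      push_cast
      ring
    exact ((hderiv t).sub h1).sub h2
  have hmono : h 1 ≤ h 0 := by
    have : AntitoneOn h (Set.Icc 0 1) := by
      apply antitoneOn_of_deriv_nonpos (convex_Icc 0 1)
      · exact Continuous.continuousOn (by
          have : Continuous h := by
            have : ∀ t, DifferentiableAt ℝ h t := fun t => (hderivh t).differentiableAt
            exact Differentiable.continuous this
          exact this)
      · intro t ht
        exact (hderivh t).differentiableAt.differentiableWithinAt
      · intro t ht
        rw [interior_Icc] at ht
        rw [(hderivh t).deriv]
        have hinner : ⟪gradient f (x + t • v), v⟫_ℝ - ⟪g, v⟫_ℝ ≤ β * t * ‖v‖ ^ 2 := by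
          have := real_inner_le_norm (gradient f (x + t • v) - g) v
          have hl := hlip (x + t • v) x
          simp only [add_sub_cancel_left] at hl
          have hnv : ‖t • v‖ = t * ‖v‖ := by
            rw [norm_smul, Real.norm_eq_abs, abs_of_pos ht.1]
          rw [hnv] at hl
          have h3 : ⟪gradient f (x + t • v) - g, v⟫_ℝ ≤ β * (t * ‖v‖) * ‖v‖ :=
            le_trans this (by
              have := mul_le_mul_of_nonneg_right hl (norm_nonneg v)
              linarith)
          rw [inner_sub_left] at h3
          nlinarith [norm_nonneg v]
        linarith
    exact this (by norm_num) (by norm_num) (by norm_num)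
  simp only [hh, one_smul, zero_smul, add_zero, one_pow, zero_pow, mul_zero, zero_mul,
    sub_zero, one_mul] at hmono
  linarith [hmono]

/-- Descent inequality under the correlated-error assumption, together with
positivity of the coefficient `z = 1 - a² - βη(1/2 - a²)`. -/
theorem descent_with_correlated_error (d : ℕ) (f : EuclideanSpace ℝ (Fin d) → ℝ)
    (β η a : ℝ) (hβ : 0 < β) (hη : 0 < η) (hηβ : η * β ≤ 1)
    (ha0 : 0 ≤ a) (ha : a ^ 2 < 1 / 2)
    (hdiff : Differentiable ℝ f)
    (hlip : ∀ x y, ‖gradient f x - gradient f y‖ ≤ β * ‖x - y‖)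
    (x δ : EuclideanSpace ℝ (Fin d))
    (hcorr : |⟪gradient f x, δ⟫_ℝ| ≤ a ^ 2 * ‖gradient f x‖ ^ 2) :
    f (x - η • (gradient f x + δ)) ≤
      f x + (β * η ^ 2 / 2) * ‖δ‖ ^ 2
        - η * (1 - a ^ 2 - β * η * (1 / 2 - a ^ 2)) * ‖gradient f x‖ ^ 2
    ∧ 0 < 1 - a ^ 2 - β * η * (1 / 2 - a ^ 2) := by
  constructor
  · set g := gradient f x with hg
    have key := descent_aux hβ hdiff hlip x (-(η • (g + δ)))
    rw [← sub_eq_add_neg] at key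
    have hin : ⟪g, -(η • (g + δ))⟫_ℝ = -η * (‖g‖ ^ 2 + ⟪g, δ⟫_ℝ) := by
      rw [inner_neg_right, real_inner_smul_right, inner_add_right, real_inner_self_eq_norm_sq]
      ring
    have hnrm : ‖-(η • (g + δ))‖ ^ 2 = η ^ 2 * (‖g‖ ^ 2 + 2 * ⟪g, δ⟫_ℝ + ‖δ‖ ^ 2) := by
      rw [norm_neg, norm_smul, mul_pow, Real.norm_eq_abs, sq_abs]
      congr 1
      rw [← real_inner_self_eq_norm_sq, inner_add_add_self, real_inner_self_eq_norm_sq,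
        real_inner_self_eq_norm_sq, real_inner_comm δ g]
      ring
    rw [hin, hnrm] at key
    have habs := abs_le.mp hcorr
    have hz : 0 ≤ η * (1 - η * β) * (a ^ 2 * ‖g‖ ^ 2 + ⟪g, δ⟫_ℝ) :=
      mul_nonneg (mul_nonneg hη.le (by linarith)) (by linarith [habs.1])
    nlinarith [key, hz]
  · nlinarith [mul_pos hη hβ]
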